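/- Let F be a field of characteristic 2, let (A,σ) be a totally decomposable central simple F-algebra of degree 2^n with involution of orthogonal type, and let S ⊆ Sym(A,σ) be a subalgebra with x² ∈ F for all x ∈ S, C_A(S) = S and dim_F S = 2^{r_F(S)}. Let 𝔰 be the associated bilinear form on S. If {v₁,…,vₙ} is a set of alternating generators of S with vᵢ² = αᵢ ∈ F^×, then 𝔰 is isometric to the bilinear n-fold Pfister form ⟨⟨α₁,…,αₙ⟩⟩; in particular 𝔰 is nondegenerate. -/

import Mathlib

/-!
Since `S` consists of symmetric elements and `σ` reverses products, `S` is commutative, so the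
monomials `v_T = ∏_{i ∈ T} v_i` multiply by `v_T v_U = (∏_{i ∈ T ∩ U} α_i) v_{T ∆ U}`; in
particular they span `S`. For `T ≠ U` this product is a scalar multiple of the alternating
element `v_{T ∆ U}`, so `𝔰(v_T, v_U) = 0`; for `T = U` it is the scalar `∏_{i ∈ T} α_i`, and in
characteristic 2 this scalar is `𝔰(v_T, v_T)`. Thus the monomials are an orthogonal family with
nonzero diagonal `∏_{i ∈ T} α_i`, hence a basis of `S` in which `𝔰` is the Pfister form.
-/

/-- The minimum rank of a finite-dimensional `F`-algebra `S`: the least cardinality of a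
subset of `S` generating `S` as an `F`-algebra. -/
noncomputable def minRank (F S : Type*) [CommSemiring F] [Semiring S] [Algebra F S] : ℕ :=
  sInf {n : ℕ | ∃ s : Finset S, s.card = n ∧ Algebra.adjoin F (s : Set S) = ⊤}

open scoped symmDiff IsMulCommutative

theorem Submodule.eq_of_add_algebraMap_mem {F A : Type*} [Field F] [Ring A] [Algebra F A]
    {M : Submodule F A} (hM : (1 : A) ∉ M) {x : A} {c d : F}
    (hc : x + algebraMap F A c ∈ M) (hd : x + algebraMap F A d ∈ M) : c = d := by
  by_contra hcd
  have h : (c - d) • (1 : A) ∈ M := by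
    simpa [Algebra.smul_def] using M.sub_mem hc hd
  exact hM ((M.smul_mem_iff (sub_ne_zero.mpr hcd)).mp h)

theorem Subalgebra.isMulCommutative_of_forall_fixed {F A : Type*} [CommSemiring F] [Semiring A]
    [Algebra F A] {σ : A → A} (hσ : ∀ x y, σ (x * y) = σ y * σ x) {S : Subalgebra F A}
    (hS : ∀ x ∈ S, σ x = x) : IsMulCommutative S :=
  .of_setLike_mul_comm fun x hx y hy => by
    rw [← hS _ (mul_mem hx hy), hσ, hS x hx, hS y hy]

theorem MonoidHom.map_prod_eq_prod_sort {ι M N : Type*} [LinearOrder ι] [CommMonoid M]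
    [Monoid N] (f : M →* N) (g : ι → M) (T : Finset ι) :
    f (∏ i ∈ T, g i) = ((T.sort (· ≤ ·)).map (f ∘ g)).prod := by
  rw [Finset.prod_eq_multiset_prod, ← Finset.sort_eq T (· ≤ ·), Multiset.map_coe,
    Multiset.prod_coe, map_list_prod, List.map_map]

section Monomials

variable {F R ι : Type*} [CommSemiring F] [CommSemiring R] [Algebra F R] [DecidableEq ι]
  {w : ι → R} {α : ι → F}

theorem prod_mul_prod_eq_algebraMap_mul_prod_symmDiff
    (hw : ∀ i, w i * w i = algebraMap F R (α i)) (T U : Finset ι) :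
    (∏ i ∈ T, w i) * ∏ i ∈ U, w i = algebraMap F R (∏ i ∈ T ∩ U, α i) * ∏ i ∈ T ∆ U, w i := by
  have hunion : T ∪ U = T ∆ U ∪ T ∩ U := (symmDiff_sup_inf T U).symm
  rw [← Finset.prod_union_inter, hunion,
    Finset.prod_union (s₁ := T ∆ U) (s₂ := T ∩ U) (disjoint_symmDiff_inf T U), map_prod,
    ← Finset.prod_congr rfl fun i _ => hw i, Finset.prod_mul_distrib]
  ring

theorem span_range_prod_eq_top_of_adjoin_eq_top
    (hw : ∀ i, w i * w i = algebraMap F R (α i)) (hgen : Algebra.adjoin F (Set.range w) = ⊤) :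
    Submodule.span F (Set.range fun T : Finset ι => ∏ i ∈ T, w i) = ⊤ := by
  set P := Submodule.span F (Set.range fun T : Finset ι => ∏ i ∈ T, w i)
  have hmem : ∀ T : Finset ι, ∏ i ∈ T, w i ∈ P := fun T => Submodule.subset_span ⟨T, rfl⟩
  have hmul : P * P ≤ P := by
    rw [Submodule.span_mul_span, Submodule.span_le]
    rintro _ ⟨_, ⟨T, rfl⟩, _, ⟨U, rfl⟩, rfl⟩
    change (∏ i ∈ T, w i) * (∏ i ∈ U, w i) ∈ P
    rw [prod_mul_prod_eq_algebraMap_mul_prod_symmDiff hw, ← Algebra.smul_def]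
    exact P.smul_mem _ (hmem _)
  let P' : Subalgebra F R := P.toSubalgebra (by simpa using hmem ∅)
    fun {_ _} hx hy => hmul (Submodule.mul_mem_mul hx hy)
  have hle : Algebra.adjoin F (Set.range w) ≤ P' := by
    rw [Algebra.adjoin_le_iff]
    rintro _ ⟨i, rfl⟩
    exact (by simpa using hmem {i} : w i ∈ P)
  exact eq_top_iff.mpr fun x _ => hle (hgen ▸ Algebra.mem_top)

end Monomials

theorem LinearMap.BilinForm.apply_equivFun_symm_of_diagonal {K V ι : Type*} [CommRing K]
    [AddCommGroup V] [Module K V] [Fintype ι] [DecidableEq ι] {B : LinearMap.BilinForm K V}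
    (b : Module.Basis ι K V) {d : ι → K} (hB : ∀ i j, B (b i) (b j) = if i = j then d i else 0)
    (x y : ι → K) :
    B (b.equivFun.symm x) (b.equivFun.symm y) = ∑ i, d i * x i * y i := by
  simp only [Module.Basis.equivFun_symm_apply, map_sum, map_smul, LinearMap.sum_apply,
    LinearMap.smul_apply, hB, smul_eq_mul, mul_ite, mul_zero, Finset.sum_ite_eq',
    Finset.mem_univ, if_true]
  exact Finset.sum_congr rfl fun i _ => by ring

theorem LinearMap.BilinForm.exists_diagonal_equiv_of_iIsOrtho {K V ι : Type*} [Field K]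
    [AddCommGroup V] [Module K V] [Fintype ι] [DecidableEq ι] {B : LinearMap.BilinForm K V}
    {u : ι → V} {d : ι → K} (hB : ∀ i j, B (u i) (u j) = if i = j then d i else 0)
    (hd : ∀ i, d i ≠ 0) (hu : Submodule.span K (Set.range u) = ⊤) :
    (∃ e : (ι → K) ≃ₗ[K] V, ∀ x y, B (e x) (e y) = ∑ i, d i * x i * y i) ∧
      ∀ z, (∀ w, B z w = 0) → z = 0 := by
  have hortho : B.iIsOrtho u := iIsOrtho_def.mpr fun i j h => by simp [hB, h]
  have hself : ∀ i, B (u i) (u i) ≠ 0 := fun i => by simpa [hB] using hd i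
  let b := Module.Basis.mk (linearIndependent_of_iIsOrtho hortho hself) hu.ge
  have hbu : ⇑b = u := Module.Basis.coe_mk _ _
  refine ⟨⟨b.equivFun.symm, apply_equivFun_symm_of_diagonal b (hbu ▸ hB)⟩, ?_⟩
  exact ((iIsOrtho.nondegenerate_iff_not_isOrtho_basis_self B b (hbu ▸ hortho)).mpr
    (hbu ▸ hself)).1

theorem apply_prod_prod_eq_ite {F A ι : Type*} [Field F] [CharP F 2] [Ring A] [Algebra F A]
    [DecidableEq ι] {M : Submodule F A} {S : Subalgebra F A} [IsMulCommutative S]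
    (hM : (1 : A) ∉ M) (s : S →ₗ[F] S →ₗ[F] F)
    (hs : ∀ x y : S, (x : A) * y + algebraMap F A (s x y) ∈ M) {w : ι → S} {α : ι → F}
    (hw : ∀ i, w i * w i = algebraMap F S (α i))
    (hprod : ∀ T : Finset ι, T.Nonempty → ((∏ i ∈ T, w i : S) : A) ∈ M) (T U : Finset ι) :
    s (∏ i ∈ T, w i) (∏ i ∈ U, w i) = if T = U then ∏ i ∈ T, α i else 0 := by
  have hTU := hs (∏ i ∈ T, w i) (∏ i ∈ U, w i)
  rw [← Subalgebra.coe_mul, prod_mul_prod_eq_algebraMap_mul_prod_symmDiff hw,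
    ← Algebra.smul_def, Subalgebra.coe_smul] at hTU
  split_ifs with h
  · subst h
    refine M.eq_of_add_algebraMap_mem hM hTU ?_
    rw [symmDiff_self, Finset.bot_eq_empty, Finset.prod_empty, Finset.inter_self,
      OneMemClass.coe_one, Algebra.smul_def, mul_one, ← map_add, CharTwo.add_self_eq_zero,
      map_zero]
    exact M.zero_mem
  · refine M.eq_of_add_algebraMap_mem hM hTU ?_
    rw [map_zero, add_zero]
    exact M.smul_mem _ (hprod _ (Finset.symmDiff_nonempty.mpr h))

theorem stmt_13_general (F A : Type*) [Field F] [CharP F 2] [Ring A] [Algebra F A]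
    (n : ℕ)
    -- `σ` is an involution of the first kind on `A`
    (σ : A →ₗ[F] A) (hmul : ∀ x y : A, σ (x * y) = σ y * σ x)
    -- `σ` is of orthogonal type: `1 ∉ Alt(A,σ)`
    (horth : (1 : A) ∉ Set.range fun a : A => a - σ a)
    -- `S ⊆ Sym(A,σ)` is a subalgebra with `x² ∈ F` for all `x ∈ S`,
    -- `C_A(S) = S`, and `dim_F S = 2 ^ r_F(S)`
    (S : Subalgebra F A) (hSsym : ∀ x ∈ S, σ x = x)
    -- `𝔰` is the associated bilinear form on `S`: `vw + 𝔰(v,w)·1 ∈ Alt(A,σ)`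
    (s : S →ₗ[F] S →ₗ[F] F)
    (hs : ∀ v w : S, ((v : A) * (w : A) + algebraMap F A (s v w))
      ∈ Set.range fun a : A => a - σ a)
    -- `{v 1, …, v n}` is a set of alternating generators of `S` with `(v i)² = α i ∈ F^×`
    (v : Fin n → A) (α : Fin n → F)
    (hvgen : Algebra.adjoin F (Set.range v) = S)
    (hvprod : ∀ T : Finset (Fin n), T.Nonempty →
      ((T.sort (· ≤ ·)).map v).prod ∈ Set.range fun a : A => a - σ a)
    (hvsq : ∀ i, v i ^ 2 = algebraMap F A (α i)) (hα : ∀ i, α i ≠ 0) :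
    -- `𝔰` is isometric to the Pfister form `⟨⟨α 1, …, α n⟩⟩`, the diagonal form whose
    -- entries are the products `∏ i ∈ T, α i` over subsets `T`; in particular it
    -- is nondegenerate
    (∃ e : (Finset (Fin n) → F) ≃ₗ[F] S,
      ∀ x y : Finset (Fin n) → F,
        s (e x) (e y) = ∑ T : Finset (Fin n), (∏ i ∈ T, α i) * x T * y T) ∧
    (∀ z : S, (∀ w : S, s z w = 0) → z = 0) := by
  classical
  have hAlt : (Set.range fun a : A => a - σ a) = LinearMap.range (LinearMap.id - σ) := by
    ext; simp
  rw [hAlt, SetLike.mem_coe] at horth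
  simp only [hAlt, SetLike.mem_coe] at hs hvprod
  have := S.isMulCommutative_of_forall_fixed hmul hSsym
  let w : Fin n → S := fun i => ⟨v i, hvgen ▸ Algebra.subset_adjoin ⟨i, rfl⟩⟩
  have hw : ∀ i, w i * w i = algebraMap F S (α i) := fun i => Subtype.ext (by simp [w, ← sq, hvsq])
  have hgen : Algebra.adjoin F (Set.range w) = ⊤ := by
    apply Subalgebra.map_injective (f := S.val) Subtype.val_injective
    rw [AlgHom.map_adjoin, ← Set.range_comp, Algebra.map_top, Subalgebra.range_val]
    exact hvgen
  have hgram := apply_prod_prod_eq_ite horth s hs hw fun T hT => by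
    convert hvprod T hT using 1
    exact (S.val : S →* A).map_prod_eq_prod_sort w T
  exact LinearMap.BilinForm.exists_diagonal_equiv_of_iIsOrtho hgram
    (fun T => Finset.prod_ne_zero_iff.mpr fun i _ => hα i)
    (span_range_prod_eq_top_of_adjoin_eq_top hw hgen)

theorem stmt_13 (F A : Type*) [Field F] [CharP F 2] [Ring A] [Algebra F A]
    [FiniteDimensional F A] (n : ℕ)
    -- `A` is a central simple `F`-algebra of degree `2 ^ n`
    (hcentral : Subalgebra.center F A = ⊥) (hsimple : IsSimpleRing A)
    (hdeg : Module.finrank F A = 4 ^ n)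
    -- `σ` is an involution of the first kind on `A`
    (σ : A →ₗ[F] A) (hmul : ∀ x y : A, σ (x * y) = σ y * σ x)
    (hone : σ 1 = 1) (hinvol : ∀ x : A, σ (σ x) = x)
    -- `σ` is of orthogonal type: `1 ∉ Alt(A,σ)`
    (horth : (1 : A) ∉ Set.range fun a : A => a - σ a)
    -- `(A,σ)` is totally decomposable
    (htd : ∃ Q : Fin n → Subalgebra F A,
      (∀ i, ∀ x ∈ Q i, σ x ∈ Q i) ∧
      (∀ i, Module.finrank F (Q i) = 4 ∧ Subalgebra.center F (Q i) = ⊥ ∧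
        IsSimpleRing (Q i)) ∧
      (∀ i j, i ≠ j → ∀ x ∈ Q i, ∀ y ∈ Q j, x * y = y * x) ∧
      (⨆ i, Q i) = ⊤)
    -- `S ⊆ Sym(A,σ)` is a subalgebra with `x² ∈ F` for all `x ∈ S`,
    -- `C_A(S) = S`, and `dim_F S = 2 ^ r_F(S)`
    (S : Subalgebra F A) (hSsym : ∀ x ∈ S, σ x = x)
    (hSconic : ∀ x ∈ S, ∃ a : F, x ^ 2 = algebraMap F A a)
    (hScent : Subalgebra.centralizer F (S : Set A) = S)
    (hSdim : Module.finrank F S = 2 ^ minRank F S)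
    -- `𝔰` is the associated bilinear form on `S`: `vw + 𝔰(v,w)·1 ∈ Alt(A,σ)`
    (s : S →ₗ[F] S →ₗ[F] F)
    (hs : ∀ v w : S, ((v : A) * (w : A) + algebraMap F A (s v w))
      ∈ Set.range fun a : A => a - σ a)
    -- `{v 1, …, v n}` is a set of alternating generators of `S` with `(v i)² = α i ∈ F^×`
    (v : Fin n → A) (α : Fin n → F)
    (hvalt : ∀ i, IsUnit (v i) ∧ v i ∈ Set.range fun a : A => a - σ a)
    (hvgen : Algebra.adjoin F (Set.range v) = S)
    (hvprod : ∀ T : Finset (Fin n), T.Nonempty →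
      ((T.sort (· ≤ ·)).map v).prod ∈ Set.range fun a : A => a - σ a)
    (hvsq : ∀ i, v i ^ 2 = algebraMap F A (α i)) (hα : ∀ i, α i ≠ 0) :
    -- `𝔰` is isometric to the Pfister form `⟨⟨α 1, …, α n⟩⟩`, the diagonal form whose
    -- entries are the products `∏ i ∈ T, α i` over subsets `T`; in particular it
    -- is nondegenerate
    (∃ e : (Finset (Fin n) → F) ≃ₗ[F] S,
      ∀ x y : Finset (Fin n) → F,
        s (e x) (e y) = ∑ T : Finset (Fin n), (∏ i ∈ T, α i) * x T * y T) ∧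
    (∀ z : S, (∀ w : S, s z w = 0) → z = 0) :=
  stmt_13_general F A n σ hmul horth S hSsym s hs v α hvgen hvprod hvsq hα
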